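/- arXiv:2506.16920 — 2 statements merged into one kernel-verified Lean document; each statement's English description precedes it below -/
import Mathlib

section
/- Suppose the n-ary brackets on L (n = 0,1,2,…) are multilinear, antisymmetric in the supersense, of parity n mod 2, and satisfy the higher Jacobi identities: for every n ≥ 0 and all homogeneous x₁,…,xₙ ∈ L, Σ_{r+s=n} Σ_{(r,s)-shuffles σ} (−1)^{rs}·sgn(σ)·(−1)^{α(σ;x)} [[x_{σ(1)},…,x_{σ(r)}], x_{σ(r+1)},…,x_{σ(n)}] = 0. Then the induced brackets on ΠL, defined by Π[x₁,…,xₙ] = (−1)^{x̃₁(n−1)+x̃₂(n−2)+⋯+x̃_{n−1}} [Πx₁,…,Πxₙ], satisfy the odd higher Jacobi identities: for every n ≥ 0 and all homogeneous u₁,…,uₙ ∈ ΠL, Σ_{r+s=n} Σ_{(r,s)-shuffles σ} (−1)^{α(σ;u)} [[u_{σ(1)},…,u_{σ(r)}], u_{σ(r+1)},…,u_{σ(n)}] = 0. -/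
/-!
STATEMENT 1. A Z/2-graded R-module L = L₀ ⊕ L₁ is presented as the product
`L0 × L1` (first factor = even part, second factor = odd part); its parity
reversion ΠL is `L1 × L0`, and Π : L → ΠL is `LinearEquiv.prodComm`.
If the n-ary brackets on L are multilinear, antisymmetric in the supersense,
of parity n mod 2, and satisfy the higher Jacobi identities
  Σ_{r+s=n} Σ_{(r,s)-shuffles σ} (−1)^{rs}·sgn(σ)·(−1)^{α(σ;x)}
      [[x_{σ(1)},…,x_{σ(r)}], x_{σ(r+1)},…,x_{σ(n)}] = 0,
then the induced brackets on ΠL, defined by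
  Π[x₁,…,xₙ] = (−1)^{x̃₁(n−1)+x̃₂(n−2)+⋯+x̃_{n−1}} [Πx₁,…,Πxₙ],
satisfy the odd higher Jacobi identities
  Σ_{r+s=n} Σ_{(r,s)-shuffles σ} (−1)^{α(σ;u)}
      [[u_{σ(1)},…,u_{σ(r)}], u_{σ(r+1)},…,u_{σ(n)}] = 0.
-/

/-- An element of `M × N` (viewed as even part × odd part of a Z/2-graded
module) is homogeneous of parity `p` if the complementary component vanishes. -/
def IsHomog {M N : Type*} [Zero M] [Zero N] (p : ZMod 2) (x : M × N) : Prop :=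
  if p = 0 then x.2 = 0 else x.1 = 0

/-- The Koszul sign of the passage from `(x₁,…,xₙ)` to `(x_{σ(1)},…,x_{σ(n)})`
for homogeneous arguments of parities `p i`. -/
def koszulSign {n : ℕ} (σ : Equiv.Perm (Fin n)) (p : Fin n → ZMod 2) : ℤ :=
  (-1) ^ ((∑ i : Fin n, ∑ j : Fin n,
    if i < j ∧ σ j < σ i then p (σ i) * p (σ j) else 0 : ZMod 2)).val

/-- The sign `(−1)^{x̃₁(n−1)+x̃₂(n−2)+⋯+x̃_{n−1}}` (0-based indexing:
slot `i` contributes `x̃ᵢ·(n−1−i)`). -/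
def shiftSign {n : ℕ} (p : Fin n → ZMod 2) : ℤ :=
  (-1) ^ ((∑ i : Fin n, p i * ((n : ZMod 2) - 1 - ((i : ℕ) : ZMod 2)) : ZMod 2)).val

/-- `σ` is an (r, n−r)-shuffle: it is increasing on the first `r` slots and on
the last `n − r` slots. -/
def IsShuffle {n : ℕ} (r : ℕ) (σ : Equiv.Perm (Fin n)) : Prop :=
  ∀ i j : Fin n, i < j → ((j : ℕ) < r ∨ r ≤ (i : ℕ)) → σ i < σ j

instance {n : ℕ} (r : ℕ) (σ : Equiv.Perm (Fin n)) : Decidable (IsShuffle r σ) := by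
  unfold IsShuffle; infer_instance

/-- The term `[[x_{σ(1)},…,x_{σ(r)}], x_{σ(r+1)},…,x_{σ(n)}]` of the higher
Jacobi identity. -/
def jacobiTerm {R : Type*} [CommRing R] {M : Type*} [AddCommGroup M] [Module R M]
    (b : ∀ n : ℕ, MultilinearMap R (fun _ : Fin n => M) M)
    {n : ℕ} (r : Fin (n + 1)) (σ : Equiv.Perm (Fin n)) (x : Fin n → M) : M :=
  b ((n - (r : ℕ)) + 1)
    (Fin.cons
      (b (r : ℕ) (fun i : Fin (r : ℕ) =>
        x (σ ⟨(i : ℕ), lt_of_lt_of_le i.isLt r.is_le⟩)))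
      (fun j : Fin (n - (r : ℕ)) =>
        x (σ ⟨(r : ℕ) + (j : ℕ), by omega⟩)))

/-!
Write `u = Π x` with parities `q = p + 1`. Twisting the `i`-th argument of `[-]` by the grading
involution `n - 1 - i` times gives brackets on `ΠL` with `Π[x] = shiftSign p • [Πx]`. Then every
term of the odd Jacobi sum for `u` is `Π` of the corresponding term of the Jacobi sum for `x`,
multiplied by `shiftSign p`, a sign independent of `r` and `σ`; so the odd sum vanishes with the
even one. With exponents in `ZMod 2`, the sign comparison comes down to three facts: the Koszul
exponent of `p + 1` is that of `p` plus the inversion number of `σ` plus `∑ₖ p (σ k) (k + σ k)`,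
because index `k` lies in `k + σ k` inversions mod 2; that sum is exactly the change of the shift
exponent when the family is permuted by `σ`; and since the inner bracket has parity `∑ pᵢ + r`,
the shift exponents of the inner and the outer bracket add up to that of the whole family plus
`r (n - r)`.
-/

open Finset Equiv

section Signs

variable {n : ℕ}

def koszulExp (σ : Perm (Fin n)) (p : Fin n → ZMod 2) : ZMod 2 :=
  ∑ i : Fin n, ∑ j : Fin n, if i < j ∧ σ j < σ i then p (σ i) * p (σ j) else 0

def shiftExp (p : Fin n → ZMod 2) : ZMod 2 :=
  ∑ i : Fin n, p i * ((n : ZMod 2) - 1 - ((i : ℕ) : ZMod 2))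

lemma uzpow_sum {ι : Type*} (s : ℤˣ) (t : Finset ι) (f : ι → ZMod 2) :
    s ^ (∑ i ∈ t, f i) = ∏ i ∈ t, s ^ f i :=
  Additive.ofMul.injective <| by simp [ofMul_prod, Finset.sum_smul]

lemma neg_one_pow_val_eq_uzpow (a : ZMod 2) : (-1 : ℤ) ^ a.val = ((-1 : ℤˣ) ^ a : ℤˣ) :=
  rfl

lemma koszulSign_eq_uzpow (σ : Perm (Fin n)) (p : Fin n → ZMod 2) :
    koszulSign σ p = ((-1 : ℤˣ) ^ koszulExp σ p : ℤˣ) :=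
  neg_one_pow_val_eq_uzpow _

lemma shiftSign_eq_uzpow (p : Fin n → ZMod 2) :
    shiftSign p = ((-1 : ℤˣ) ^ shiftExp p : ℤˣ) :=
  neg_one_pow_val_eq_uzpow _

lemma shiftSign_mul_self (p : Fin n → ZMod 2) : shiftSign p * shiftSign p = 1 := by
  rw [shiftSign_eq_uzpow, ← Units.val_mul, Int.units_mul_self, Units.val_one]

lemma Equiv.Perm.sign_eq_uzpow_koszulExp_one (σ : Perm (Fin n)) :
    Perm.sign σ = (-1 : ℤˣ) ^ koszulExp σ 1 := by
  rw [σ.sign_eq_prod_prod_Ioi, koszulExp, uzpow_sum]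
  refine prod_congr rfl fun i _ => ?_
  rw [uzpow_sum, ← filter_lt_eq_Ioi, prod_filter]
  refine prod_congr rfl fun j _ => ?_
  by_cases hij : i < j
  · rcases (σ.injective.ne hij.ne).lt_or_gt with h | h <;> simp [hij, h, h.not_gt]
  · simp [hij]

lemma Fin.sum_boole_lt_eq_val (k : Fin n) :
    ∑ j : Fin n, (if j < k then 1 else 0 : ZMod 2) = ((k : ℕ) : ZMod 2) := by
  rw [sum_boole, filter_gt_eq_Iio, Fin.card_Iio]

lemma sum_inversions_through (σ : Perm (Fin n)) (k : Fin n) :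
    ∑ j : Fin n, ((if j < k ∧ σ k < σ j then 1 else 0) +
        (if k < j ∧ σ j < σ k then 1 else 0) : ZMod 2)
      = ((k : ℕ) : ZMod 2) + ((σ k : ℕ) : ZMod 2) := by
  -- for `j ≠ k`, `{j, k}` is an inversion iff exactly one of `j < k`, `σ j < σ k` holds
  have hpair : ∀ j, ((if j < k ∧ σ k < σ j then 1 else 0) +
      (if k < j ∧ σ j < σ k then 1 else 0) : ZMod 2)
        = (if j < k then 1 else 0) + (if σ j < σ k then 1 else 0) := by
    intro j
    rcases lt_trichotomy j k with h | rfl | h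
    · rcases (σ.injective.ne h.ne).lt_or_gt with h' | h' <;>
        simp [h, h', h.not_gt, h'.not_gt, CharTwo.add_self_eq_zero]
    · simp
    · rcases (σ.injective.ne h.ne).lt_or_gt with h' | h' <;>
        simp [h, h', h.not_gt, h'.not_gt]
  rw [sum_congr rfl fun j _ => hpair j, sum_add_distrib, Fin.sum_boole_lt_eq_val,
    Equiv.sum_comp σ fun j => if j < σ k then (1 : ZMod 2) else 0, Fin.sum_boole_lt_eq_val]

lemma sum_inversions_add (σ : Perm (Fin n)) (a : Fin n → ZMod 2) :
    ∑ i : Fin n, ∑ j : Fin n, (if i < j ∧ σ j < σ i then a i + a j else 0)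
      = ∑ k : Fin n, a k * (((k : ℕ) : ZMod 2) + ((σ k : ℕ) : ZMod 2)) := by
  have hsplit : ∀ i j : Fin n, (if i < j ∧ σ j < σ i then a i + a j else 0)
      = a i * (if i < j ∧ σ j < σ i then 1 else 0)
        + a j * (if i < j ∧ σ j < σ i then 1 else 0) := by
    intro i j; split_ifs <;> ring
  simp only [hsplit, sum_add_distrib, ← mul_sum]
  rw [sum_comm (f := fun i j => a j * if i < j ∧ σ j < σ i then (1 : ZMod 2) else 0)]
  simp only [← mul_sum, ← sum_add_distrib, ← mul_add, ← sum_inversions_through σ]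
  exact sum_congr rfl fun k _ => congrArg _ (sum_congr rfl fun j _ => add_comm _ _)

lemma koszulExp_add_one (σ : Perm (Fin n)) (p : Fin n → ZMod 2) :
    koszulExp σ (p + 1) = koszulExp σ p + koszulExp σ 1
      + ∑ k : Fin n, p (σ k) * (((k : ℕ) : ZMod 2) + ((σ k : ℕ) : ZMod 2)) := by
  rw [← sum_inversions_add σ fun k => p (σ k), koszulExp, koszulExp, koszulExp,
    ← sum_add_distrib, ← sum_add_distrib]
  refine sum_congr rfl fun i _ => ?_
  rw [← sum_add_distrib, ← sum_add_distrib]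
  refine sum_congr rfl fun j _ => ?_
  split_ifs
  · simp only [Pi.add_apply, Pi.one_apply]; ring
  · simp

lemma shiftExp_comp_add (σ : Perm (Fin n)) (p : Fin n → ZMod 2) :
    shiftExp (fun k => p (σ k))
        + ∑ k : Fin n, p (σ k) * (((k : ℕ) : ZMod 2) + ((σ k : ℕ) : ZMod 2))
      = shiftExp p := by
  rw [shiftExp, shiftExp,
    ← Equiv.sum_comp σ fun i => p i * ((n : ZMod 2) - 1 - ((i : ℕ) : ZMod 2)),
    ← sum_add_distrib]
  refine sum_congr rfl fun k _ => ?_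
  linear_combination (p (σ k) * ((σ k : ℕ) : ZMod 2)) * (CharTwo.two_eq_zero : (2 : ZMod 2) = 0)

lemma Fin.sum_univ_eq_sum_lt_add_sum_ge {M : Type*} [AddCommMonoid M] {r : ℕ} (hr : r ≤ n)
    (f : Fin n → M) :
    ∑ i, f i = ∑ i : Fin r, f ⟨i, by omega⟩ + ∑ j : Fin (n - r), f ⟨r + j, by omega⟩ := by
  rw [← Fin.sum_congr' f (Nat.add_sub_of_le hr), Fin.sum_univ_add]
  rfl

lemma shiftExp_split (a : Fin n → ZMod 2) {r : ℕ} (hr : r ≤ n) :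
    shiftExp (fun i : Fin r => a ⟨i, by omega⟩)
      + shiftExp (Fin.cons (∑ i : Fin r, a ⟨i, by omega⟩ + r)
          fun j : Fin (n - r) => a ⟨r + j, by omega⟩ : Fin (n - r + 1) → ZMod 2)
      = ((r * (n - r) : ℕ) : ZMod 2) + shiftExp a := by
  have hhead : ∑ i : Fin r, a ⟨i, by omega⟩ * ((r : ZMod 2) - 1 - ((i : ℕ) : ZMod 2))
      + (∑ i : Fin r, a ⟨i, by omega⟩) * ((n - r : ℕ) : ZMod 2)
      = ∑ i : Fin r, a ⟨i, by omega⟩ * ((n : ZMod 2) - 1 - ((i : ℕ) : ZMod 2)) := by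
    rw [sum_mul, ← sum_add_distrib]
    refine sum_congr rfl fun i _ => ?_
    push_cast [Nat.cast_sub hr]
    ring
  have htail : ∑ j : Fin (n - r), a ⟨r + j, by omega⟩
        * (((n - r + 1 : ℕ) : ZMod 2) - 1 - ((j.succ : ℕ) : ZMod 2))
      = ∑ j : Fin (n - r), a ⟨r + j, by omega⟩
        * ((n : ZMod 2) - 1 - ((r + j : ℕ) : ZMod 2)) := by
    refine sum_congr rfl fun j _ => ?_
    push_cast [Nat.cast_sub hr, Fin.val_succ]
    ring
  rw [shiftExp, shiftExp, shiftExp, Fin.sum_univ_succ, Fin.sum_univ_eq_sum_lt_add_sum_ge hr]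
  simp only [Fin.cons_zero, Fin.cons_succ, Fin.val_zero, Nat.cast_zero, sub_zero]
  push_cast [Nat.cast_sub hr] at hhead htail ⊢
  linear_combination hhead + htail

lemma koszulSign_add_one_mul_shiftSign_blocks (σ : Perm (Fin n)) (p : Fin n → ZMod 2)
    (r : Fin (n + 1)) :
    koszulSign σ (p + 1) *
        (shiftSign (fun i : Fin r => p (σ ⟨i, lt_of_lt_of_le i.isLt r.is_le⟩)) *
          shiftSign (Fin.cons (∑ i : Fin r, p (σ ⟨i, lt_of_lt_of_le i.isLt r.is_le⟩) + (r : ℕ))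
            fun j : Fin (n - r) => p (σ ⟨r + j, by omega⟩) : Fin (n - r + 1) → ZMod 2))
      = shiftSign p * ((-1) ^ ((r : ℕ) * (n - r)) * Perm.sign σ * koszulSign σ p) := by
  have hpow : (-1 : ℤ) ^ ((r : ℕ) * (n - r))
      = ((-1 : ℤˣ) ^ (((r : ℕ) * (n - r) : ℕ) : ZMod 2) : ℤˣ) := by
    rw [uzpow_natCast]; push_cast; rfl
  rw [koszulSign_eq_uzpow, koszulSign_eq_uzpow, shiftSign_eq_uzpow, shiftSign_eq_uzpow,
    shiftSign_eq_uzpow, Perm.sign_eq_uzpow_koszulExp_one, hpow]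
  simp only [← Units.val_mul, ← uzpow_add]
  congr 2
  linear_combination koszulExp_add_one σ p + shiftExp_split (fun k => p (σ k)) r.is_le
    + shiftExp_comp_add σ p

end Signs

lemma zmod_two_eq_zero_or_eq_one (a : ZMod 2) : a = 0 ∨ a = 1 := by
  decide +revert

lemma isHomog_swap_iff {M N : Type*} [Zero M] [Zero N] {p : ZMod 2} {x : M × N} :
    IsHomog (p + 1) x.swap ↔ IsHomog p x := by
  rcases zmod_two_eq_zero_or_eq_one p with rfl | rfl <;>
    simp [IsHomog, CharTwo.add_self_eq_zero]

section ParityReversion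

variable {R : Type*} [CommRing R] {L0 L1 : Type*}
  [AddCommGroup L0] [AddCommGroup L1] [Module R L0] [Module R L1]

variable (R L0 L1) in
def gradingInvolution : L0 × L1 →ₗ[R] L0 × L1 :=
  LinearMap.prodMap LinearMap.id (-LinearMap.id)

lemma IsHomog.gradingInvolution_apply {p : ZMod 2} {x : L0 × L1} (hx : IsHomog p x) :
    gradingInvolution R L0 L1 x = (((-1 : ℤˣ) ^ p : ℤˣ) : ℤ) • x := by
  rcases zmod_two_eq_zero_or_eq_one p with rfl | rfl <;>
    simp_all [IsHomog, gradingInvolution, Prod.ext_iff]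

lemma IsHomog.gradingInvolution_pow_apply {p : ZMod 2} {x : L0 × L1} (hx : IsHomog p x)
    (k : ℕ) : (gradingInvolution R L0 L1 ^ k) x = (((-1 : ℤˣ) ^ (p * k) : ℤˣ) : ℤ) • x := by
  induction k with
  | zero => simp
  | succ k ih =>
    rw [pow_succ, Module.End.mul_apply, hx.gradingInvolution_apply, map_zsmul, ih, smul_smul,
      ← Units.val_mul, ← uzpow_add]
    push_cast
    ring_nf

variable (b : ∀ n : ℕ, MultilinearMap R (fun _ : Fin n => L0 × L1) (L0 × L1))

def piBracket (n : ℕ) : MultilinearMap R (fun _ : Fin n => L1 × L0) (L1 × L0) :=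
  (LinearEquiv.prodComm R L0 L1).toLinearMap.compMultilinearMap
    ((b n).compLinearMap fun i =>
      (gradingInvolution R L0 L1 ^ (n - 1 - i : ℕ)) ∘ₗ (LinearEquiv.prodComm R L1 L0).toLinearMap)

lemma piBracket_prodComm {n : ℕ} {x : Fin n → L0 × L1} {p : Fin n → ZMod 2}
    (hx : ∀ i, IsHomog (p i) (x i)) :
    piBracket b n (fun i => LinearEquiv.prodComm R L0 L1 (x i))
      = shiftSign p • LinearEquiv.prodComm R L0 L1 (b n x) := by
  let c : Fin n → ℤ := fun i => ((-1 : ℤˣ) ^ (p i * ((n - 1 - i : ℕ) : ZMod 2)) : ℤˣ)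
  have hprod : ∏ i, c i = shiftSign p := by
    rw [shiftSign_eq_uzpow, shiftExp, uzpow_sum, Units.coe_prod]
    refine prod_congr rfl fun i _ => ?_
    have hi := i.isLt
    simp only [c, Nat.cast_sub (show (i : ℕ) ≤ n - 1 by omega), Nat.cast_sub (show 1 ≤ n by omega),
      Nat.cast_one]
  calc piBracket b n (fun i => LinearEquiv.prodComm R L0 L1 (x i))
      = LinearEquiv.prodComm R L0 L1 ((b n).restrictScalars ℤ fun i => c i • x i) := by
        simp [piBracket, (hx _).gradingInvolution_pow_apply, c]
    _ = shiftSign p • LinearEquiv.prodComm R L0 L1 (b n x) := by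
        rw [MultilinearMap.map_smul_univ, hprod, map_zsmul]
        rfl

lemma MultilinearMap.cons_zsmul {M N : Type*} [AddCommGroup M] [AddCommGroup N]
    [Module R M] [Module R N] {m : ℕ} (f : MultilinearMap R (fun _ : Fin (m + 1) => M) N)
    (c : ℤ) (w : M) (t : Fin m → M) :
    f (Fin.cons (c • w) t) = c • f (Fin.cons w t) :=
  (f.restrictScalars ℤ).cons_smul t c w

lemma koszulSign_smul_jacobiTerm_piBracket
    (hpar : ∀ (n : ℕ) (x : Fin n → L0 × L1) (p : Fin n → ZMod 2),
      (∀ i, IsHomog (p i) (x i)) → IsHomog ((∑ i, p i) + (n : ZMod 2)) (b n x))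
    {n : ℕ} {x : Fin n → L0 × L1} {p : Fin n → ZMod 2} (hx : ∀ i, IsHomog (p i) (x i))
    (r : Fin (n + 1)) (σ : Perm (Fin n)) :
    koszulSign σ (p + 1) •
        jacobiTerm (piBracket b) r σ (fun i => LinearEquiv.prodComm R L0 L1 (x i))
      = LinearEquiv.prodComm R L0 L1
          ((shiftSign p * ((-1) ^ ((r : ℕ) * (n - r)) * Perm.sign σ * koszulSign σ p)) •
            jacobiTerm b r σ x) := by
  set e := LinearEquiv.prodComm R L0 L1
  let y : Fin r → L0 × L1 := fun i => x (σ ⟨i, lt_of_lt_of_le i.isLt r.is_le⟩)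
  let py : Fin r → ZMod 2 := fun i => p (σ ⟨i, lt_of_lt_of_le i.isLt r.is_le⟩)
  let z : Fin (n - r + 1) → L0 × L1 := Fin.cons (b r y) fun j => x (σ ⟨r + j, by omega⟩)
  let pz : Fin (n - r + 1) → ZMod 2 :=
    Fin.cons (∑ i, py i + (r : ℕ)) fun j => p (σ ⟨r + j, by omega⟩)
  have hz : ∀ t, IsHomog (pz t) (z t) :=
    Fin.cases (hpar r y py fun i => hx _) fun j => hx _
  calc koszulSign σ (p + 1) • jacobiTerm (piBracket b) r σ (fun i => e (x i))
      = koszulSign σ (p + 1) • piBracket b (n - r + 1)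
          (Fin.cons (shiftSign py • e (b r y)) fun j => e (x (σ ⟨r + j, by omega⟩))) := by
        rw [jacobiTerm, piBracket_prodComm b fun i => hx _]
    _ = koszulSign σ (p + 1) • shiftSign py • piBracket b (n - r + 1) (fun t => e (z t)) := by
        rw [MultilinearMap.cons_zsmul]
        congr 3
        funext t
        exact Fin.cases rfl (fun j => rfl) t
    _ = (koszulSign σ (p + 1) * (shiftSign py * shiftSign pz)) • e (b (n - r + 1) z) := by
        rw [piBracket_prodComm b hz, smul_smul, smul_smul, mul_assoc]
    _ = _ := by
        rw [koszulSign_add_one_mul_shiftSign_blocks, map_zsmul]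
        rfl

end ParityReversion

theorem parity_reversion_sends_higher_Jacobi_to_odd_higher_Jacobi_general
    (R : Type*) [CommRing R] (L0 L1 : Type*)
    [AddCommGroup L0] [AddCommGroup L1] [Module R L0] [Module R L1]
    -- the n-ary brackets on L = L0 × L1, multilinear over R
    (b : ∀ n : ℕ, MultilinearMap R (fun _ : Fin n => L0 × L1) (L0 × L1))
    -- the n-ary bracket has parity n mod 2
    (hpar : ∀ (n : ℕ) (x : Fin n → L0 × L1) (p : Fin n → ZMod 2),
      (∀ i, IsHomog (p i) (x i)) →
      IsHomog ((∑ i, p i) + (n : ZMod 2)) (b n x))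
    -- the brackets satisfy the higher Jacobi identities
    (hjac : ∀ (n : ℕ) (x : Fin n → L0 × L1) (p : Fin n → ZMod 2),
      (∀ i, IsHomog (p i) (x i)) →
      ∑ r : Fin (n + 1), ∑ σ : Equiv.Perm (Fin n),
        (if IsShuffle (r : ℕ) σ then
          ((-1 : ℤ) ^ ((r : ℕ) * (n - (r : ℕ))) * (Equiv.Perm.sign σ : ℤ) *
            koszulSign σ p) • jacobiTerm b r σ x
        else 0) = 0) :
    -- then the induced brackets on ΠL = L1 × L0 ...
    ∃ bPi : ∀ n : ℕ, MultilinearMap R (fun _ : Fin n => L1 × L0) (L1 × L0),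
      -- ... defined by Π[x₁,…,xₙ] = (−1)^{x̃₁(n−1)+⋯+x̃_{n−1}}[Πx₁,…,Πxₙ] ...
      (∀ (n : ℕ) (x : Fin n → L0 × L1) (p : Fin n → ZMod 2),
        (∀ i, IsHomog (p i) (x i)) →
        LinearEquiv.prodComm R L0 L1 (b n x) =
          shiftSign p • bPi n (fun i => LinearEquiv.prodComm R L0 L1 (x i))) ∧
      -- ... satisfy the odd higher Jacobi identities.
      (∀ (n : ℕ) (u : Fin n → L1 × L0) (q : Fin n → ZMod 2),
        (∀ i, IsHomog (q i) (u i)) →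
        ∑ r : Fin (n + 1), ∑ σ : Equiv.Perm (Fin n),
          (if IsShuffle (r : ℕ) σ then
            koszulSign σ q • jacobiTerm bPi r σ u
          else 0) = 0) := by
  refine ⟨piBracket b, fun n x p hx => ?_, fun n u q hu => ?_⟩
  · rw [piBracket_prodComm b hx, smul_smul, shiftSign_mul_self, one_smul]
  obtain ⟨x, rfl⟩ : ∃ x : Fin n → L0 × L1, u = fun i => LinearEquiv.prodComm R L0 L1 (x i) :=
    ⟨fun i => (u i).swap, rfl⟩
  obtain ⟨p, rfl⟩ : ∃ p : Fin n → ZMod 2, q = p + 1 :=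
    ⟨q + 1, by ext i; simp [add_assoc, CharTwo.add_self_eq_zero]⟩
  have hx : ∀ i, IsHomog (p i) (x i) := fun i => isHomog_swap_iff.mp (hu i)
  calc _ = LinearEquiv.prodComm R L0 L1 (shiftSign p • ∑ r : Fin (n + 1), ∑ σ : Perm (Fin n),
          if IsShuffle (r : ℕ) σ then
            ((-1 : ℤ) ^ ((r : ℕ) * (n - (r : ℕ))) * (Perm.sign σ : ℤ) * koszulSign σ p) •
              jacobiTerm b r σ x
          else 0) := by
        simp only [smul_sum, map_sum]
        refine sum_congr rfl fun r _ => sum_congr rfl fun σ _ => ?_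
        split_ifs
        · rw [koszulSign_smul_jacobiTerm_piBracket b hpar hx, mul_smul]
        · rw [smul_zero, map_zero]
    _ = 0 := by rw [hjac n x p hx, smul_zero, map_zero]

theorem parity_reversion_sends_higher_Jacobi_to_odd_higher_Jacobi
    (R : Type*) [CommRing R] (L0 L1 : Type*)
    [AddCommGroup L0] [AddCommGroup L1] [Module R L0] [Module R L1]
    -- the n-ary brackets on L = L0 × L1, multilinear over R
    (b : ∀ n : ℕ, MultilinearMap R (fun _ : Fin n => L0 × L1) (L0 × L1))
    -- the n-ary bracket has parity n mod 2
    (hpar : ∀ (n : ℕ) (x : Fin n → L0 × L1) (p : Fin n → ZMod 2),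
      (∀ i, IsHomog (p i) (x i)) →
      IsHomog ((∑ i, p i) + (n : ZMod 2)) (b n x))
    -- the brackets are antisymmetric in the supersense
    (hanti : ∀ (n : ℕ) (x : Fin n → L0 × L1) (p : Fin n → ZMod 2)
      (σ : Equiv.Perm (Fin n)), (∀ i, IsHomog (p i) (x i)) →
      b n (fun i => x (σ i)) =
        ((Equiv.Perm.sign σ : ℤ) * koszulSign σ p) • b n x)
    -- the brackets satisfy the higher Jacobi identities
    (hjac : ∀ (n : ℕ) (x : Fin n → L0 × L1) (p : Fin n → ZMod 2),
      (∀ i, IsHomog (p i) (x i)) →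
      ∑ r : Fin (n + 1), ∑ σ : Equiv.Perm (Fin n),
        (if IsShuffle (r : ℕ) σ then
          ((-1 : ℤ) ^ ((r : ℕ) * (n - (r : ℕ))) * (Equiv.Perm.sign σ : ℤ) *
            koszulSign σ p) • jacobiTerm b r σ x
        else 0) = 0) :
    -- then the induced brackets on ΠL = L1 × L0 ...
    ∃ bPi : ∀ n : ℕ, MultilinearMap R (fun _ : Fin n => L1 × L0) (L1 × L0),
      -- ... defined by Π[x₁,…,xₙ] = (−1)^{x̃₁(n−1)+⋯+x̃_{n−1}}[Πx₁,…,Πxₙ] ...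
      (∀ (n : ℕ) (x : Fin n → L0 × L1) (p : Fin n → ZMod 2),
        (∀ i, IsHomog (p i) (x i)) →
        LinearEquiv.prodComm R L0 L1 (b n x) =
          shiftSign p • bPi n (fun i => LinearEquiv.prodComm R L0 L1 (x i))) ∧
      -- ... satisfy the odd higher Jacobi identities.
      (∀ (n : ℕ) (u : Fin n → L1 × L0) (q : Fin n → ZMod 2),
        (∀ i, IsHomog (q i) (u i)) →
        ∑ r : Fin (n + 1), ∑ σ : Equiv.Perm (Fin n),
          (if IsShuffle (r : ℕ) σ then
            koszulSign σ q • jacobiTerm bPi r σ u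
          else 0) = 0) :=
  parity_reversion_sends_higher_Jacobi_to_odd_higher_Jacobi_general R L0 L1 b hpar hjac
end

section
/- Fix s ∈ Z, weights w₁,…,w_N ∈ Z on variables x₁,…,x_N and weights v₁,…,v_M ∈ Z on variables y₁,…,y_M. Let g ∈ R[y₁,…,y_M] be weighted homogeneous of weight s, let φ_i ∈ R[x₁,…,x_N] be weighted homogeneous of weight v_i for each i, and for l ≥ 0 and indices i₁,…,i_l ∈ {1,…,M} let T ∈ R[x₁,…,x_N] be weighted homogeneous of weight v_{i₁}+⋯+v_{i_l} − (l−1)s. Then the polynomial T · Π_{j=1}^{l} (∂g/∂y_{i_j})(φ₁,…,φ_M) is weighted homogeneous of weight s with respect to w₁,…,w_N. Consequently, every term S^{i₁…i_l}(x) · ∂_{i_l}g(φ(x)) ⋯ ∂_{i₁}g(φ(x)) of the pullback expansion f(x) = S⁰(x) + g(φ(x)) + ½ S^{ij}(x) ∂_j g(φ(x)) ∂_i g(φ(x)) + … by an s-shifted thick morphism is weighted homogeneous of weight s whenever g has weight s. -/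
/-!
Substituting polynomials of weights `v i` into a polynomial homogeneous of weight `n` for the
weights `v` gives a polynomial of weight `n`, since each monomial `y^d` becomes a product of
`φ i ^ d i`, of weight `∑ d i • v i = n`. Hence `∂_i g (φ)` has weight `s - v i`, and the weights
of `T` and of the `l` factors add up to `s`.
-/

open MvPolynomial

namespace MvPolynomial

variable {R S σ τ M : Type*} [CommSemiring R] [CommSemiring S] [Algebra R S] [AddCommMonoid M]

theorem IsWeightedHomogeneous.aeval {v : σ → M} {w : τ → M} {p : MvPolynomial σ R} {n : M}
    (hp : IsWeightedHomogeneous v p n) {φ : σ → MvPolynomial τ S}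
    (hφ : ∀ i, IsWeightedHomogeneous w (φ i) (v i)) :
    IsWeightedHomogeneous w (MvPolynomial.aeval φ p) n := by
  induction hp using IsWeightedHomogeneous.induction_on with
  | zero => simpa using isWeightedHomogeneous_zero S w n
  | add p q _ _ hp hq => simpa using hp.add hq
  | monomial d r hd =>
    have hprod : IsWeightedHomogeneous w (d.prod fun i k => φ i ^ k) n := by
      rw [← hd, Finsupp.weight_apply]
      exact IsWeightedHomogeneous.prod _ _ _ fun i _ => (hφ i).pow (d i)
    rw [aeval_monomial, algebraMap_apply]
    exact hprod.C_mul _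

end MvPolynomial

theorem pullback_expansion_term_isWeightedHomogeneous
    (R : Type*) [CommRing R] (N M : ℕ) (s : ℤ)
    (w : Fin N → ℤ) (v : Fin M → ℤ)
    (g : MvPolynomial (Fin M) R)
    (hg : IsWeightedHomogeneous v g s)
    (φ : Fin M → MvPolynomial (Fin N) R)
    (hφ : ∀ i, IsWeightedHomogeneous w (φ i) (v i))
    (l : ℕ) (idx : Fin l → Fin M)
    (T : MvPolynomial (Fin N) R)
    (hT : IsWeightedHomogeneous w T ((∑ j, v (idx j)) - ((l : ℤ) - 1) * s)) :
    IsWeightedHomogeneous w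
      (T * ∏ j : Fin l, aeval φ (pderiv (idx j) g)) s := by
  have hfactor (i : Fin M) : IsWeightedHomogeneous w (aeval φ (pderiv i g)) (s - v i) :=
    (hg.pderiv (sub_add_cancel s (v i))).aeval hφ
  have hprod := IsWeightedHomogeneous.prod Finset.univ _ _ fun j _ => hfactor (idx j)
  convert hT.mul hprod using 1
  rw [Finset.sum_sub_distrib, Finset.sum_const, Finset.card_univ, Fintype.card_fin, nsmul_eq_mul]
  ring
end
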